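/- Let u₁ : [0,T] → ℝ^p be continuous, y_d : [0,T] → ℝ^q continuously differentiable, Υ ∈ ℝ^{p×q}, and define u₂(t) = u₁(t) + Υ·(y_d′(t) − z(u₁)(t)) and u₃(t) = u₂(t) + Υ·(y_d′(t) − z(u₂)(t)). Then for all t ∈ [0,T], u₃(t) − u₂(t) = (I_p − Υ·C·B)·(u₂(t) − u₁(t)) − ∫₀ᵗ Υ·C·A·exp((t−τ)A)·B·(u₂(τ) − u₁(τ)) dτ. -/

import Mathlib

open MeasureTheory Set

section ExpAux
attribute [local instance] Matrix.linftyOpNormedAddCommGroup Matrix.linftyOpNormedRing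
  Matrix.linftyOpNormedAlgebra

lemma aux_exp_continuous {n : ℕ} (A : Matrix (Fin n) (Fin n) ℝ) :
    Continuous fun t : ℝ => NormedSpace.exp (t • A) :=
  NormedSpace.exp_continuous.comp (continuous_id.smul continuous_const)

lemma aux_exp_add {n : ℕ} (A : Matrix (Fin n) (Fin n) ℝ) (s t : ℝ) :
    NormedSpace.exp ((s + t) • A) =
      NormedSpace.exp (s • A) * NormedSpace.exp (t • A) := by
  rw [add_smul]
  exact NormedSpace.exp_add_of_commute (((Commute.refl A).smul_right t).smul_left s)

end ExpAux

/-- **input-increment recursion of D-type ILC.** For two successive D-type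
updates `u₂ = u₁ + Υ·(y_d′ − z(u₁))`, `u₃ = u₂ + Υ·(y_d′ − z(u₂))`, the increments satisfy
`u₃ − u₂ = (I − ΥCB)(u₂ − u₁) − ∫₀ᵗ Υ·C·A·exp((t−τ)A)·B·(u₂ − u₁)(τ) dτ`. -/
theorem dtype_ilc_input_increment_recursion
    (T : ℝ) (hT : 0 < T) (n p q : ℕ)
    (A : Matrix (Fin n) (Fin n) ℝ) (B : Matrix (Fin n) (Fin p) ℝ)
    (C : Matrix (Fin q) (Fin n) ℝ) (x₀ : Fin n → ℝ)
    (w : ℝ → Fin n → ℝ) (hw : ContinuousOn w (Icc 0 T))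
    (Z : (ℝ → Fin p → ℝ) → ℝ → Fin q → ℝ)
    (hZ : ∀ (v : ℝ → Fin p → ℝ) (t : ℝ),
      Z v t = C.mulVec ((A * NormedSpace.exp (t • A)).mulVec x₀) +
        C.mulVec (B.mulVec (v t) + w t) +
        ∫ τ in (0:ℝ)..t,
          C.mulVec ((A * NormedSpace.exp ((t - τ) • A)).mulVec (B.mulVec (v τ) + w τ)))
    (Υ : Matrix (Fin p) (Fin q) ℝ)
    (yd yd' : ℝ → Fin q → ℝ)
    (hyd : ∀ t ∈ Icc (0:ℝ) T, HasDerivWithinAt yd (yd' t) (Icc 0 T) t)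
    (hyd' : ContinuousOn yd' (Icc 0 T))
    (u₁ u₂ u₃ : ℝ → Fin p → ℝ) (hu₁ : ContinuousOn u₁ (Icc 0 T))
    (hu₂ : ∀ t, u₂ t = u₁ t + Υ.mulVec (yd' t - Z u₁ t))
    (hu₃ : ∀ t, u₃ t = u₂ t + Υ.mulVec (yd' t - Z u₂ t)) :
    ∀ t ∈ Icc (0:ℝ) T,
      u₃ t - u₂ t =
        ((1 : Matrix (Fin p) (Fin p) ℝ) - Υ * C * B).mulVec (u₂ t - u₁ t) -
          ∫ τ in (0:ℝ)..t,
            (Υ * C * A * NormedSpace.exp ((t - τ) • A) * B).mulVec (u₂ τ - u₁ τ) := by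
  -- abbreviation for the matrix exponential flow
  set e : ℝ → Matrix (Fin n) (Fin n) ℝ := fun s => NormedSpace.exp (s • A) with he
  have he' : ∀ s : ℝ, NormedSpace.exp (s • A) = e s := fun _ => rfl
  have hec : Continuous e := aux_exp_continuous A
  have hsplit : ∀ s τ : ℝ, e (s - τ) = e s * e (-τ) := by
    intro s τ
    rw [he]
    simp only
    rw [show s - τ = s + (-τ) by ring, aux_exp_add]
  -- continuity of `fun t => (M t).mulVec (v t)`
  have hmv : ∀ {a b : ℕ} {M : ℝ → Matrix (Fin a) (Fin b) ℝ} {v : ℝ → Fin b → ℝ} {s : Set ℝ},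
      ContinuousOn M s → ContinuousOn v s →
      ContinuousOn (fun t => (M t).mulVec (v t)) s := by
    intro a b M v s hM hv
    exact (Continuous.matrix_mulVec continuous_fst continuous_snd).comp_continuousOn (hM.prodMk hv)
  -- the forced-response integrand, with the parameter factored out
  have hgen : ∀ v : ℝ → Fin p → ℝ, ContinuousOn v (Icc 0 T) →
      ContinuousOn (fun τ => (e (-τ)).mulVec (B.mulVec (v τ) + w τ)) (Icc 0 T) := by
    intro v hv
    exact hmv (M := fun τ => e (-τ)) (v := fun τ => B.mulVec (v τ) + w τ)
      ((hec.comp continuous_neg).continuousOn)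
      ((hmv (M := fun _ => B) continuousOn_const hv).add hw)
  -- representation of the integral term of `Z v`
  have hZrep : ∀ (v : ℝ → Fin p → ℝ), ContinuousOn v (Icc 0 T) → ∀ s ∈ Icc (0:ℝ) T,
      (∫ τ in (0:ℝ)..s, C.mulVec ((A * e (s - τ)).mulVec (B.mulVec (v τ) + w τ)))
        = (C * A * e s).mulVec
            (∫ τ in (0:ℝ)..s, (e (-τ)).mulVec (B.mulVec (v τ) + w τ)) := by
    intro v hv s hs
    have h1 : ∀ τ : ℝ, C.mulVec ((A * e (s - τ)).mulVec (B.mulVec (v τ) + w τ))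
        = (C * A * e s).mulVec ((e (-τ)).mulVec (B.mulVec (v τ) + w τ)) := by
      intro τ
      rw [hsplit, Matrix.mulVec_mulVec, Matrix.mulVec_mulVec]
      simp only [← Matrix.mul_assoc]
    simp_rw [h1]
    have hint : IntervalIntegrable
        (fun τ => (e (-τ)).mulVec (B.mulVec (v τ) + w τ)) volume 0 s := by
      apply ContinuousOn.intervalIntegrable
      apply (hgen v hv).mono
      rw [uIcc_of_le hs.1]
      exact Icc_subset_Icc le_rfl hs.2
    exact ((Matrix.mulVecLin (C * A * e s)).toContinuousLinearMap).intervalIntegral_comp_comm hint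
  -- continuity of `Z v` for continuous `v`
  have hZcont : ∀ v : ℝ → Fin p → ℝ, ContinuousOn v (Icc 0 T) →
      ContinuousOn (Z v) (Icc 0 T) := by
    intro v hv
    have heq : ∀ s ∈ Icc (0:ℝ) T, Z v s =
        C.mulVec ((A * e s).mulVec x₀) + C.mulVec (B.mulVec (v s) + w s) +
          (C * A * e s).mulVec
            (∫ τ in (0:ℝ)..s, (e (-τ)).mulVec (B.mulVec (v τ) + w τ)) := by
      intro s hs
      rw [hZ v s]
      simp only [he']
      rw [hZrep v hv s hs]
    apply ContinuousOn.congr _ heq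
    have hG : ContinuousOn
        (fun s => ∫ τ in (0:ℝ)..s, (e (-τ)).mulVec (B.mulVec (v τ) + w τ)) (Icc 0 T) := by
      have := intervalIntegral.continuousOn_primitive_interval (μ := volume) (a := (0:ℝ)) (b := T)
        (f := fun τ => (e (-τ)).mulVec (B.mulVec (v τ) + w τ)) ?_
      · rwa [uIcc_of_le hT.le] at this
      · rw [uIcc_of_le hT.le]
        exact (hgen v hv).integrableOn_Icc
    refine ContinuousOn.add (ContinuousOn.add ?_ ?_) ?_
    · exact hmv (M := fun _ => C) continuousOn_const
        (hmv (M := fun s => A * e s) (v := fun _ => x₀)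
          (continuous_const.matrix_mul hec).continuousOn continuousOn_const)
    · exact hmv (M := fun _ => C) continuousOn_const
        ((hmv (M := fun _ => B) continuousOn_const hv).add hw)
    · exact hmv (M := fun s => C * A * e s)
        ((continuous_const.matrix_mul hec).continuousOn) hG
  -- continuity of u₂
  have hu₂c : ContinuousOn u₂ (Icc 0 T) := by
    have : ContinuousOn (fun t => u₁ t + Υ.mulVec (yd' t - Z u₁ t)) (Icc 0 T) :=
      hu₁.add (hmv (M := fun _ => Υ) continuousOn_const (hyd'.sub (hZcont u₁ hu₁)))
    exact this.congr fun t _ => hu₂ t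
  -- now the main computation
  intro t ht
  have hIcc : Icc (0:ℝ) t ⊆ Icc 0 T := Icc_subset_Icc le_rfl ht.2
  have huI : uIcc (0:ℝ) t = Icc 0 t := uIcc_of_le ht.1
  -- interval integrability of the Z-integrands
  have hii : ∀ v : ℝ → Fin p → ℝ, ContinuousOn v (Icc 0 T) →
      IntervalIntegrable
        (fun τ => C.mulVec ((A * e (t - τ)).mulVec (B.mulVec (v τ) + w τ))) volume 0 t := by
    intro v hv
    apply ContinuousOn.intervalIntegrable
    rw [huI]
    exact hmv (M := fun τ => A * e (t - τ)) (v := fun τ => B.mulVec (v τ) + w τ)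
      (continuous_const.matrix_mul
        (hec.comp (continuous_const.sub continuous_id))).continuousOn
      (((hmv (M := fun _ => B) continuousOn_const hv).add hw).mono hIcc)
      |>.comp continuousOn_id (fun x hx => hx) |> fun h => hmv (M := fun _ => C)
        continuousOn_const h
  have hiid : IntervalIntegrable
      (fun τ => (C * A * e (t - τ) * B).mulVec (u₂ τ - u₁ τ)) volume 0 t := by
    apply ContinuousOn.intervalIntegrable
    rw [huI]
    exact hmv (M := fun τ => C * A * e (t - τ) * B) (v := fun τ => u₂ τ - u₁ τ)
      ((continuous_const.matrix_mul
        (hec.comp (continuous_const.sub continuous_id))).matrix_mul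
          continuous_const).continuousOn
      ((hu₂c.sub hu₁).mono hIcc)
  -- increments via the update law
  have hd : ∀ s, u₂ s - u₁ s = Υ.mulVec (yd' s - Z u₁ s) := fun s => by
    rw [hu₂ s]; abel
  have hd3 : u₃ t - u₂ t = Υ.mulVec (yd' t - Z u₂ t) := by
    rw [hu₃ t]; abel
  have hstep : u₃ t - u₂ t = (u₂ t - u₁ t) + Υ.mulVec (Z u₁ t - Z u₂ t) := by
    rw [hd, hd3, ← Matrix.mulVec_add]
    abel
  -- difference of the Z's
  have hZdiff : Z u₁ t - Z u₂ t =
      C.mulVec (B.mulVec (u₁ t - u₂ t)) +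
        ∫ τ in (0:ℝ)..t, (C * A * e (t - τ) * B).mulVec (u₁ τ - u₂ τ) := by
    rw [hZ u₁ t, hZ u₂ t]
    simp only [he']
    rw [show ∀ (X P₁ P₂ I₁ I₂ : Fin q → ℝ),
        (X + P₁ + I₁) - (X + P₂ + I₂) = (P₁ - P₂) + (I₁ - I₂) from
      fun _ _ _ _ _ => by abel]
    rw [← intervalIntegral.integral_sub (hii u₁ hu₁) (hii u₂ hu₂c)]
    have hpt : ∀ τ : ℝ,
        C.mulVec ((A * e (t - τ)).mulVec (B.mulVec (u₁ τ) + w τ)) -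
          C.mulVec ((A * e (t - τ)).mulVec (B.mulVec (u₂ τ) + w τ)) =
        (C * A * e (t - τ) * B).mulVec (u₁ τ - u₂ τ) := by
      intro τ
      rw [← Matrix.mulVec_sub, ← Matrix.mulVec_sub,
        show (B.mulVec (u₁ τ) + w τ) - (B.mulVec (u₂ τ) + w τ)
          = B.mulVec (u₁ τ) - B.mulVec (u₂ τ) by abel,
        ← Matrix.mulVec_sub, Matrix.mulVec_mulVec, Matrix.mulVec_mulVec]
      simp only [← Matrix.mul_assoc]
    simp_rw [hpt]
    rw [show C.mulVec (B.mulVec (u₁ t) + w t) - C.mulVec (B.mulVec (u₂ t) + w t)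
        = C.mulVec (B.mulVec (u₁ t - u₂ t)) by
      rw [← Matrix.mulVec_sub,
        show (B.mulVec (u₁ t) + w t) - (B.mulVec (u₂ t) + w t)
          = B.mulVec (u₁ t) - B.mulVec (u₂ t) by abel, ← Matrix.mulVec_sub]]
  -- push Υ through
  have hpush : Υ.mulVec (Z u₁ t - Z u₂ t) =
      -( (Υ * C * B).mulVec (u₂ t - u₁ t) ) -
        ∫ τ in (0:ℝ)..t, (Υ * C * A * e (t - τ) * B).mulVec (u₂ τ - u₁ τ) := by
    rw [hZdiff, Matrix.mulVec_add]
    have h1 : Υ.mulVec (C.mulVec (B.mulVec (u₁ t - u₂ t)))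
        = -((Υ * C * B).mulVec (u₂ t - u₁ t)) := by
      rw [Matrix.mulVec_mulVec, Matrix.mulVec_mulVec, ← neg_sub (u₂ t) (u₁ t),
        Matrix.mulVec_neg]
    have h2 : Υ.mulVec (∫ τ in (0:ℝ)..t, (C * A * e (t - τ) * B).mulVec (u₁ τ - u₂ τ))
        = -∫ τ in (0:ℝ)..t, (Υ * C * A * e (t - τ) * B).mulVec (u₂ τ - u₁ τ) := by
      have hiid' : IntervalIntegrable
          (fun τ => (C * A * e (t - τ) * B).mulVec (u₁ τ - u₂ τ)) volume 0 t := by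
        have : (fun τ => (C * A * e (t - τ) * B).mulVec (u₁ τ - u₂ τ))
            = fun τ => -((C * A * e (t - τ) * B).mulVec (u₂ τ - u₁ τ)) := by
          funext τ
          rw [← Matrix.mulVec_neg, neg_sub]
        rw [this]
        exact hiid.neg
      have hcc := ((Matrix.mulVecLin Υ).toContinuousLinearMap).intervalIntegral_comp_comm
        (μ := volume) hiid'
      simp only [LinearMap.coe_toContinuousLinearMap', Matrix.mulVecLin_apply] at hcc
      rw [← hcc, ← intervalIntegral.integral_neg]
      apply intervalIntegral.integral_congr
      intro τ _
      simp only [Matrix.mulVec_mulVec, ← Matrix.mul_assoc]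
      rw [← neg_sub (u₂ τ) (u₁ τ), Matrix.mulVec_neg]
    rw [h1, h2]
    abel
  rw [hstep, hpush, Matrix.sub_mulVec, Matrix.one_mulVec]
  simp only [he']
  abel
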